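/- Let L > 1 and consider the quadratic equation in r arising from the condition 1/r = (4L + 4 + 2r(π−4))/(L² − 1 + r²(π−4)), i.e. r²(4−π) − r(4L+4) + (L²−1) = 0 restricted to the smaller root. Then r(L) = (L/2)·((1+1/L)/(1−π/4))·(1 − √(1 − (1−π/4)(1−1/L)/(1+1/L))) satisfies this equation, and moreover 0 < r(L) < r_∞ := L/(2+√π), with r(L) → 0 as L → 1⁺. -/

import Mathlib

open MeasureTheory Real Set Filter

noncomputable section

abbrev E2 := EuclideanSpace ℝ (Fin 2)

/-- Divergence of a vector field on the plane. -/
def div2 (z : E2 → E2) (x : E2) : ℝ := ∑ i : Fin 2, fderiv ℝ z x (EuclideanSpace.single i 1) i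

/-- The dual set defining the total variation. -/
def tvSet (u : E2 → ℝ) : Set ℝ :=
  {y | ∃ z : E2 → E2, ContDiff ℝ (⊤ : ℕ∞) z ∧ HasCompactSupport z ∧ (∀ x, ‖z x‖ ≤ 1) ∧
        y = ∫ x, u x * div2 z x}

/-- Total variation of a function on ℝ². -/
def TV (u : E2 → ℝ) : ℝ := sSup (tvSet u)

/-- `u` has bounded variation. -/
def HasBV (u : E2 → ℝ) : Prop := BddAbove (tvSet u)

/-- Perimeter of a set. -/
def Per (A : Set E2) : ℝ := TV (A.indicator 1)

/-- `A` has finite perimeter. -/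
def FinPer (A : Set E2) : Prop := HasBV (A.indicator 1)

/-- Lebesgue measure as a real number. -/
def volR (A : Set E2) : ℝ := (volume A).toReal

/-- Cheeger constant of a domain `D`. -/
def cheegerConst (D : Set E2) : ℝ :=
  sInf {q : ℝ | ∃ A : Set E2, MeasurableSet A ∧ FinPer A ∧ A ⊆ D ∧ 0 < volR A ∧ q = Per A / volR A}

/-- `A` is a Cheeger set of `D`. -/
def IsCheegerSet (D A : Set E2) : Prop :=
  MeasurableSet A ∧ FinPer A ∧ A ⊆ D ∧ 0 < volR A ∧ Per A / volR A = cheegerConst D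

/-- The optimal rounding radius of Example 5.4a. -/
def rL : ℝ → ℝ := fun L =>
  (L / 2) * ((1 + 1 / L) / (1 - π / 4)) *
    (1 - Real.sqrt (1 - (1 - π / 4) * (1 - 1 / L) / (1 + 1 / L)))

/-- `rL L` solves the quadratic equation of Example 5.4a, lies strictly between
`0` and the Cheeger inradius `L/(2+√π)`, and tends to `0` as `L → 1⁺`. -/
theorem stmt16 :
    (∀ L : ℝ, 1 < L →
      (rL L) ^ 2 * (4 - π) - rL L * (4 * L + 4) + (L ^ 2 - 1) = 0 ∧
      0 < rL L ∧ rL L < L / (2 + Real.sqrt π)) ∧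
    Filter.Tendsto rL (nhdsWithin 1 (Set.Ioi 1)) (nhds 0) := by
  have hπ4 : π < 4 := by linarith [Real.pi_lt_d2]
  have hπ0 : 0 < π := Real.pi_pos
  have hπne : (1 : ℝ) - π/4 ≠ 0 := by intro h; nlinarith
  have h4πne : (4 : ℝ) - π ≠ 0 := by intro h; nlinarith
  constructor
  · intro L hL
    have hL0 : (0:ℝ) < L := by linarith
    have hLne : L ≠ 0 := ne_of_gt hL0
    have hden : (0:ℝ) < 1 + 1/L := by positivity
    set t : ℝ := Real.sqrt (1 - (1 - π/4) * (1 - 1/L) / (1 + 1/L)) with ht_def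
    have ht0 : 0 ≤ t := Real.sqrt_nonneg _
    have hfrac0 : 0 < (1 - 1/L)/(1+1/L) := by
      apply div_pos _ hden
      have : 1/L < 1 := by rw [div_lt_one hL0]; linarith
      linarith
    have hfrac1 : (1 - 1/L)/(1 + 1/L) < 1 := by
      rw [div_lt_one hden]
      have : 0 < 1/L := by positivity
      linarith
    have hs_pos : 0 < 1 - (1 - π/4) * (1 - 1/L) / (1 + 1/L) := by
      rw [mul_div_assoc]
      nlinarith
    have hs_lt : 1 - (1 - π/4) * (1 - 1/L) / (1 + 1/L) < 1 := by
      rw [mul_div_assoc]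
      nlinarith
    have ht2 : t^2 = 1 - (1 - π/4) * (1 - 1/L) / (1 + 1/L) := Real.sq_sqrt hs_pos.le
    have ht1 : t < 1 := by nlinarith
    have hr : rL L = 2*(L+1)/(4-π)*(1-t) := by
      rw [rL, ← ht_def]
      field_simp
      ring
    clear_value t
    have ht3 : 4*(L+1)*t^2 = 4*(L+1) - (4-π)*(L-1) := by
      rw [ht2]
      field_simp
    have heq : (rL L) ^ 2 * (4 - π) - rL L * (4 * L + 4) + (L ^ 2 - 1) = 0 := by
      rw [hr]
      field_simp
      linear_combination (L+1) * ht3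
    refine ⟨heq, ?_, ?_⟩
    · rw [hr]
      have hA4 : (0:ℝ) < 4 - π := by linarith
      have h1 : 0 < 2*(L+1)/(4-π) := by positivity
      exact mul_pos h1 (by linarith)
    · have hsq : Real.sqrt π ^ 2 = π := Real.sq_sqrt hπ0.le
      have hsq0 : 0 < Real.sqrt π := Real.sqrt_pos.mpr hπ0
      set c : ℝ := 2 + Real.sqrt π with hc_def
      have hc0 : 0 < c := by positivity
      have hcπ : c * (4 - c) = 4 - π := by rw [hc_def]; nlinarith [hsq]
      have hfval : (4-π)*(L/c)^2 - 4*(L+1)*(L/c) + (L^2-1) = -(4*L + c)/c := by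
        rw [hc_def]
        field_simp
        linear_combination L^2 * hsq
      clear_value c
      obtain ⟨r, hrr⟩ : ∃ r, rL L = r := ⟨_, rfl⟩
      rw [hrr] at heq hr ⊢
      obtain ⟨x, hx⟩ : ∃ x, L/c = x := ⟨_, rfl⟩
      rw [hx] at hfval ⊢
      have hA4 : (0:ℝ) < 4 - π := by linarith
      clear hrr ht2 ht3 ht_def hs_pos hs_lt hfrac0 hfrac1 hden hπne h4πne hcπ hsq hsq0 hc_def
      have e1 : (4-π) * r ≤ 2*(L+1) := by
        rw [hr]
        have hmm : (4-π)*(2*(L+1)/(4-π)*(1-t)) = 2*(L+1)*(1-t) := by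
          field_simp
        rw [hmm]
        nlinarith [mul_nonneg (by linarith : (0:ℝ) ≤ L+1) ht0]
      have hpos : 0 < (4*L + c)/c := by positivity
      by_contra hcon
      push_neg at hcon
      have h1 : 0 ≤ r - x := by linarith
      have e2 : (4-π) * x ≤ 2*(L+1) := by
        have := mul_le_mul_of_nonneg_left hcon hA4.le
        linarith
      have h2 : 0 ≤ 4*(L+1) - (4-π)*(x + r) := by nlinarith [e1, e2]
      have hkey : (r - x)*(4*(L+1) - (4-π)*(x + r)) =
          ((4-π)*x^2 - 4*(L+1)*x + (L^2-1)) -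
          (r^2*(4-π) - r*(4*L+4) + (L^2-1)) := by ring
      rw [heq, hfval, neg_div] at hkey
      have hfin := mul_nonneg h1 h2
      rw [hkey] at hfin
      linarith
  · have hA : ContinuousAt (fun L : ℝ => 1/L) 1 :=
      ContinuousAt.div continuousAt_const continuousAt_id one_ne_zero
    have hB : ContinuousAt (fun L : ℝ => (1 - π/4) * (1 - 1/L) / (1 + 1/L)) 1 :=
      ContinuousAt.div (continuousAt_const.mul (continuousAt_const.sub hA))
        (continuousAt_const.add hA) (by norm_num)
    have hC : ContinuousAt rL 1 := by
      apply ContinuousAt.mul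
      · exact ContinuousAt.mul (continuousAt_id.div continuousAt_const two_ne_zero)
          (ContinuousAt.div (continuousAt_const.add hA) continuousAt_const hπne)
      · exact continuousAt_const.sub (Real.continuous_sqrt.continuousAt.comp
          (continuousAt_const.sub hB))
    have h0 : rL 1 = 0 := by
      rw [rL]
      norm_num
    have : Filter.Tendsto rL (nhdsWithin 1 (Set.Ioi 1)) (nhds (rL 1)) :=
      hC.tendsto.mono_left nhdsWithin_le_nhds
    rwa [h0] at this


end
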